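/- arXiv:1001.3335 — 4 statements merged into one kernel-verified Lean document; each statement's English description precedes it below -/
import Mathlib

section
/- The operators Θ_i := ((A+z_i-z_{i+1})(A+(1-β/2)(z_{i+1}-z_i))τ_i - A(A-z_i+z_{i+1}))/((1-β/2)(z_i-z_{i+1})(A-z_i+z_{i+1})), where τ_i swaps the variables z_i and z_{i+1}, satisfy the symmetric group Coxeter relations: Θ_i² = 1, (Θ_iΘ_{i+1})³ = 1, and Θ_iΘ_j = Θ_jΘ_i for |i-j| > 1. -/
/- STATEMENT 0: The operators Θ_i satisfy the symmetric group Coxeter relations. -/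

open MvPolynomial

noncomputable section

/-- The field of rational functions in variables `z_i` (i : ℕ) and `A, β` over ℚ. -/
abbrev BrauerField : Type := FractionRing (MvPolynomial (ℕ ⊕ Fin 2) ℚ)

/-- The variable `z i`. -/
def zVar (i : ℕ) : BrauerField :=
  algebraMap (MvPolynomial (ℕ ⊕ Fin 2) ℚ) BrauerField (X (Sum.inl i))

/-- The variable `A`. -/
def Avar : BrauerField :=
  algebraMap (MvPolynomial (ℕ ⊕ Fin 2) ℚ) BrauerField (X (Sum.inr 0))

/-- The variable `β`. -/
def betaVar : BrauerField :=
  algebraMap (MvPolynomial (ℕ ⊕ Fin 2) ℚ) BrauerField (X (Sum.inr 1))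

/-- `τ i`: the field automorphism exchanging the variables `z i` and `z (i+1)`
and fixing all other generators. -/
def tau (i : ℕ) : BrauerField ≃+* BrauerField :=
  IsFractionRing.ringEquivOfRingEquiv
    (MvPolynomial.renameEquiv ℚ
      (Equiv.sumCongr (Equiv.swap i (i+1)) (Equiv.refl (Fin 2)))).toRingEquiv

/-- The operator `Θ i` acting on rational functions. -/
def Theta (i : ℕ) (p : BrauerField) : BrauerField :=
  ((Avar + zVar i - zVar (i+1)) * (Avar + (1 - betaVar/2) * (zVar (i+1) - zVar i)) * tau i p
      - Avar * (Avar - zVar i + zVar (i+1)) * p) /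
    ((1 - betaVar/2) * (zVar i - zVar (i+1)) * (Avar - zVar i + zVar (i+1)))

/-!
Write `Θ_i = f(u) τ_i + g(u)` with `u = z_i - z_{i+1}`, `c = 1 - β/2`,
`f(u) = (A + u)(A - c u) / (c u (A - u))` and `g(u) = -A / (c u)`. Since the `τ_i` fix `A` and `c`
and satisfy the Coxeter relations of the transpositions `(i i+1)`, expanding the products reduces the
Coxeter relations of the `Θ_i` to three identities between the coefficients:
`f(u) f(-u) + g(u)² = 1`, `g(-u) = -g(u)` and `g(u) g(v) = g(u + v) (g(u) + g(v))`.
-/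

section TwistedOp

variable {K : Type*} [CommRing K]

def twistedOp (f g : K → K) (σ : K ≃+* K) (u p : K) : K := f u * σ p + g u * p

variable {f g : K → K}

lemma twistedOp_twistedOp_self {σ : K ≃+* K} {u : K} (hσ : ∀ p, σ (σ p) = p)
    (hf : ∀ t, σ (f t) = f (σ t)) (hg : ∀ t, σ (g t) = g (σ t)) (hu : σ u = -u)
    (hg_neg : g (-u) = -g u) (hunit : f u * f (-u) + g u ^ 2 = 1) (p : K) :
    twistedOp f g σ u (twistedOp f g σ u p) = p := by
  simp only [twistedOp, map_add, map_mul, hf, hg, hu, hσ, hg_neg]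
  linear_combination p * hunit

lemma twistedOp_comm {σ τ : K ≃+* K} {u v : K} (hστ : ∀ p, σ (τ p) = τ (σ p))
    (hf : ∀ t, σ (f t) = f (σ t)) (hg : ∀ t, σ (g t) = g (σ t))
    (hf' : ∀ t, τ (f t) = f (τ t)) (hg' : ∀ t, τ (g t) = g (τ t))
    (hσv : σ v = v) (hτu : τ u = u) (p : K) :
    twistedOp f g σ u (twistedOp f g τ v p) = twistedOp f g τ v (twistedOp f g σ u p) := by
  simp only [twistedOp, map_add, map_mul, hf, hg, hf', hg', hσv, hτu, hστ]
  ring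

lemma twistedOp_braid {σ τ : K ≃+* K} {u v : K} (hσ : ∀ p, σ (σ p) = p)
    (hτ : ∀ p, τ (τ p) = p) (hστ : ∀ p, σ (τ (σ p)) = τ (σ (τ p)))
    (hf : ∀ t, σ (f t) = f (σ t)) (hg : ∀ t, σ (g t) = g (σ t))
    (hf' : ∀ t, τ (f t) = f (τ t)) (hg' : ∀ t, τ (g t) = g (τ t))
    (hσu : σ u = -u) (hσv : σ v = u + v) (hτu : τ u = u + v) (hτv : τ v = -v)
    (hg_neg_u : g (-u) = -g u) (hg_neg_v : g (-v) = -g v)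
    (hunit_u : f u * f (-u) + g u ^ 2 = 1) (hunit_v : f v * f (-v) + g v ^ 2 = 1)
    (hadd : g u * g v = g (u + v) * (g u + g v)) (p : K) :
    twistedOp f g σ u (twistedOp f g τ v (twistedOp f g σ u p)) =
      twistedOp f g τ v (twistedOp f g σ u (twistedOp f g τ v p)) := by
  simp only [twistedOp, map_add, map_mul, hf, hg, hf', hg', hσu, hσv, hτu, hτv, hσ, hτ, hστ,
    neg_add_cancel_left, add_neg_cancel_right, hg_neg_u, hg_neg_v]
  linear_combination (f u * σ p - f v * τ p + (g u - g v) * p) * hadd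
    + g (u + v) * p * (hunit_u - hunit_v)

end TwistedOp

section Coefficients

variable {K : Type*} [Field K] (A c : K)

def thetaSwapCoeff (t : K) : K := (A + t) * (A - c * t) / (c * t * (A - t))

def thetaDiagCoeff (t : K) : K := -(A / (c * t))

lemma thetaDiagCoeff_neg (t : K) : thetaDiagCoeff A c (-t) = -thetaDiagCoeff A c t := by
  simp only [thetaDiagCoeff, mul_neg, div_neg, neg_neg]

variable {A c}

lemma thetaSwapCoeff_mul_neg_add_sq {t : K} (hc : c ≠ 0) (ht : t ≠ 0) (hAt : A + t ≠ 0)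
    (hAt' : A - t ≠ 0) :
    thetaSwapCoeff A c t * thetaSwapCoeff A c (-t) + thetaDiagCoeff A c t ^ 2 = 1 := by
  have : A - -t ≠ 0 := by rwa [sub_neg_eq_add]
  simp only [thetaSwapCoeff, thetaDiagCoeff]
  field_simp
  ring

lemma thetaDiagCoeff_mul {u v : K} (hu : u ≠ 0) (hv : v ≠ 0) (huv : u + v ≠ 0) :
    thetaDiagCoeff A c u * thetaDiagCoeff A c v =
      thetaDiagCoeff A c (u + v) * (thetaDiagCoeff A c u + thetaDiagCoeff A c v) := by
  simp only [thetaDiagCoeff]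
  field_simp
  ring

variable {L F : Type*} [Field L] [FunLike F K L] [RingHomClass F K L]

lemma map_thetaSwapCoeff (σ : F) (t : K) :
    σ (thetaSwapCoeff A c t) = thetaSwapCoeff (σ A) (σ c) (σ t) := by
  simp only [thetaSwapCoeff, map_div₀, map_mul, map_add, map_sub]

lemma map_thetaDiagCoeff (σ : F) (t : K) :
    σ (thetaDiagCoeff A c t) = thetaDiagCoeff (σ A) (σ c) (σ t) := by
  simp only [thetaDiagCoeff, map_neg, map_div₀, map_mul]

end Coefficients

section Automorphisms

def renameRingAut (σ R : Type*) [CommSemiring R] : Equiv.Perm σ →* RingAut (MvPolynomial σ R) where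
  toFun e := (renameEquiv R e).toRingEquiv
  map_one' := by ext; simp
  map_mul' e e' := by ext; simp [RingAut.mul_apply]

def permAut : Equiv.Perm ℕ →* RingAut BrauerField :=
  (IsFractionRing.ringEquivOfRingEquivHom _ BrauerField).comp <|
    (renameRingAut (ℕ ⊕ Fin 2) ℚ).comp <|
      (Equiv.Perm.sumCongrHom ℕ (Fin 2)).comp (MonoidHom.inl _ _)

lemma tau_eq_permAut (i : ℕ) : tau i = permAut (Equiv.swap i (i + 1)) := rfl

lemma swap_succ_braid (i : ℕ) :
    Equiv.swap i (i + 1) * Equiv.swap (i + 1) (i + 1 + 1) * Equiv.swap i (i + 1) =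
      Equiv.swap (i + 1) (i + 1 + 1) * Equiv.swap i (i + 1) * Equiv.swap (i + 1) (i + 1 + 1) := by
  rw [Equiv.swap_mul_swap_mul_swap (by omega) (by omega), Equiv.swap_comm i,
    Equiv.swap_comm (i + 1) (i + 1 + 1), Equiv.swap_mul_swap_mul_swap (by omega) (by omega),
    Equiv.swap_comm]

lemma swap_succ_commute {i j : ℕ} (h : 1 < Nat.dist i j) :
    Commute (Equiv.swap i (i + 1)) (Equiv.swap j (j + 1)) := by
  unfold Nat.dist at h
  refine (Equiv.Perm.disjoint_swap_swap ?_).commute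
  simp only [List.nodup_cons, List.mem_cons, List.not_mem_nil, List.nodup_nil, or_false, not_or,
    not_false_eq_true, and_true]
  omega

lemma tau_tau (i : ℕ) (p : BrauerField) : tau i (tau i p) = p := by
  rw [tau_eq_permAut, ← RingAut.mul_apply, ← map_mul, Equiv.swap_mul_self, map_one,
    RingAut.one_apply]

lemma tau_braid (i : ℕ) (p : BrauerField) :
    tau i (tau (i + 1) (tau i p)) = tau (i + 1) (tau i (tau (i + 1) p)) := by
  simp only [tau_eq_permAut, ← RingAut.mul_apply, ← map_mul, ← mul_assoc, swap_succ_braid]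

lemma tau_comm {i j : ℕ} (h : 1 < Nat.dist i j) (p : BrauerField) :
    tau i (tau j p) = tau j (tau i p) := by
  simp only [tau_eq_permAut, ← RingAut.mul_apply, ← map_mul, (swap_succ_commute h).eq]

lemma tau_zVar (i j : ℕ) : tau i (zVar j) = zVar (Equiv.swap i (i + 1) j) := by
  simp [tau, zVar, Sum.inl_injective.swap_apply]

lemma tau_Avar (i : ℕ) : tau i Avar = Avar := by
  simp [tau, Avar, Equiv.swap_apply_of_ne_of_ne]

lemma tau_betaVar (i : ℕ) : tau i betaVar = betaVar := by
  simp [tau, betaVar, Equiv.swap_apply_of_ne_of_ne]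

end Automorphisms

section Nonvanishing

lemma zVar_injective : Function.Injective zVar :=
  (IsFractionRing.injective (MvPolynomial (ℕ ⊕ Fin 2) ℚ) BrauerField).comp
    (X_injective.comp Sum.inl_injective)

lemma zVar_sub_zVar_ne_zero {a b : ℕ} (h : a ≠ b) : zVar a - zVar b ≠ 0 :=
  sub_ne_zero.2 (zVar_injective.ne h)

lemma Avar_add_zVar_sub_zVar_ne_zero (a b : ℕ) : Avar + (zVar a - zVar b) ≠ 0 := by
  rw [Avar, zVar, zVar, ← map_sub, ← map_add, Ne,
    IsFractionRing.to_map_eq_zero_iff]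
  intro h
  simpa [Pi.single_apply] using congrArg (eval (Pi.single (Sum.inr 0) 1)) h

lemma Avar_sub_zVar_sub_zVar_ne_zero (a b : ℕ) : Avar - (zVar a - zVar b) ≠ 0 := by
  convert Avar_add_zVar_sub_zVar_ne_zero b a using 1
  ring

lemma one_sub_betaVar_div_two_ne_zero : (1 - betaVar / 2 : BrauerField) ≠ 0 := by
  have : betaVar ≠ 2 := by
    rw [betaVar, ← map_ofNat (algebraMap (MvPolynomial (ℕ ⊕ Fin 2) ℚ) BrauerField) 2, Ne,
      (IsFractionRing.injective _ _).eq_iff]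
    intro h
    have h0 := congrArg (eval 0) h
    rw [eval_X, map_ofNat] at h0
    norm_num at h0
  intro h
  exact this (by linear_combination -2 * h)

end Nonvanishing

local notation "κ" => (1 - betaVar / 2 : BrauerField)

lemma tau_one_sub_betaVar_div_two (i : ℕ) : tau i κ = κ := by
  simp [map_div₀, map_ofNat, tau_betaVar]

lemma tau_thetaSwapCoeff (i : ℕ) (t : BrauerField) :
    tau i (thetaSwapCoeff Avar κ t) = thetaSwapCoeff Avar κ (tau i t) := by
  rw [map_thetaSwapCoeff, tau_Avar, tau_one_sub_betaVar_div_two]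

lemma tau_thetaDiagCoeff (i : ℕ) (t : BrauerField) :
    tau i (thetaDiagCoeff Avar κ t) = thetaDiagCoeff Avar κ (tau i t) := by
  rw [map_thetaDiagCoeff, tau_Avar, tau_one_sub_betaVar_div_two]

lemma thetaSwapCoeff_zVar_sub_zVar_mul_neg_add_sq {a b : ℕ} (h : a ≠ b) :
    thetaSwapCoeff Avar κ (zVar a - zVar b) * thetaSwapCoeff Avar κ (-(zVar a - zVar b)) +
      thetaDiagCoeff Avar κ (zVar a - zVar b) ^ 2 = 1 :=
  thetaSwapCoeff_mul_neg_add_sq one_sub_betaVar_div_two_ne_zero (zVar_sub_zVar_ne_zero h)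
    (Avar_add_zVar_sub_zVar_ne_zero a b) (Avar_sub_zVar_sub_zVar_ne_zero a b)

lemma Theta_eq_twistedOp (i : ℕ) :
    Theta i = twistedOp (thetaSwapCoeff Avar κ) (thetaDiagCoeff Avar κ) (tau i)
      (zVar i - zVar (i + 1)) := by
  funext p
  have hκ := one_sub_betaVar_div_two_ne_zero
  have ht := zVar_sub_zVar_ne_zero (a := i) (b := i + 1) (by omega)
  have hAt := Avar_sub_zVar_sub_zVar_ne_zero i (i + 1)
  have hAt' : Avar - zVar i + zVar (i + 1) ≠ 0 := by
    convert hAt using 1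
    ring
  simp only [Theta, twistedOp, thetaSwapCoeff, thetaDiagCoeff]
  field_simp
  ring

lemma Theta_Theta (i : ℕ) (p : BrauerField) : Theta i (Theta i p) = p := by
  rw [Theta_eq_twistedOp]
  refine twistedOp_twistedOp_self (tau_tau i) (tau_thetaSwapCoeff i) (tau_thetaDiagCoeff i)
    ?_ (thetaDiagCoeff_neg _ _ _) (thetaSwapCoeff_zVar_sub_zVar_mul_neg_add_sq (by omega)) p
  simp [tau_zVar]

lemma Theta_braid (i : ℕ) (p : BrauerField) :
    Theta i (Theta (i + 1) (Theta i p)) = Theta (i + 1) (Theta i (Theta (i + 1) p)) := by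
  rw [Theta_eq_twistedOp, Theta_eq_twistedOp]
  refine twistedOp_braid (tau_tau i) (tau_tau (i + 1)) (tau_braid i)
    (tau_thetaSwapCoeff i) (tau_thetaDiagCoeff i)
    (tau_thetaSwapCoeff (i + 1)) (tau_thetaDiagCoeff (i + 1)) ?_ ?_ ?_ ?_
    (thetaDiagCoeff_neg _ _ _) (thetaDiagCoeff_neg _ _ _)
    (thetaSwapCoeff_zVar_sub_zVar_mul_neg_add_sq (by omega))
    (thetaSwapCoeff_zVar_sub_zVar_mul_neg_add_sq (by omega))
    (thetaDiagCoeff_mul (zVar_sub_zVar_ne_zero (by omega)) (zVar_sub_zVar_ne_zero (by omega))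
      (by rw [sub_add_sub_cancel]; exact zVar_sub_zVar_ne_zero (by omega))) p
  all_goals simp (disch := omega) [tau_zVar, Equiv.swap_apply_of_ne_of_ne]

lemma Theta_comm {i j : ℕ} (h : 1 < Nat.dist i j) (p : BrauerField) :
    Theta i (Theta j p) = Theta j (Theta i p) := by
  unfold Nat.dist at h
  rw [Theta_eq_twistedOp, Theta_eq_twistedOp]
  refine twistedOp_comm (tau_comm h) (tau_thetaSwapCoeff i) (tau_thetaDiagCoeff i)
    (tau_thetaSwapCoeff j) (tau_thetaDiagCoeff j) ?_ ?_ p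
  all_goals simp (disch := omega) [tau_zVar, Equiv.swap_apply_of_ne_of_ne]

/-- The `Θ_i` satisfy the symmetric group Coxeter relations:
`Θ_i² = 1`, `(Θ_i Θ_{i+1})³ = 1`, and `Θ_i Θ_j = Θ_j Θ_i` for `|i - j| > 1`. -/
theorem theta_coxeter_relations :
    (∀ i : ℕ, Theta i ∘ Theta i = id) ∧
    (∀ i : ℕ, (Theta i ∘ Theta (i+1))^[3] = id) ∧
    (∀ i j : ℕ, 1 < Nat.dist i j → Theta i ∘ Theta j = Theta j ∘ Theta i) := by
  refine ⟨fun i => funext (Theta_Theta i), fun i => funext fun p => ?_,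
    fun i j h => funext (Theta_comm h)⟩
  change Theta i (Theta (i + 1) (Theta i (Theta (i + 1) (Theta i (Theta (i + 1) p))))) = p
  rw [← Theta_braid i, Theta_Theta, Theta_Theta, Theta_Theta]

end
end

section
/- The sets Ŝ_{π,π'} are nonempty for every pair of fixed-point-free involutions π, π' of {1,...,N}: in fact there exists a finite (non-affine) permutation s ∈ S_N with s·π = π' admitting a reduced-type word f_{i_k}···f_{i_1} in which no letter f_{i_ℓ} is applied to an involution fixing the pair (i_ℓ, i_ℓ+1). -/
/-!
A letter `f_i` applied to `σ` with `σ i ≠ i + 1` and `σ (i + 1) ≠ i` is undone by the same letter,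
which again meets no arch; so connectivity by tadpole-free words is an equivalence relation.
It therefore suffices to connect every fixed-point-free involution to the standard one
`(0 1)(2 3)⋯`. If the points below an even `m` are already paired in the standard way, the
partner `a` of `m` lies above `m`; while `a > m + 1`, conjugating by `f_{a-1}` moves it down by
one without ever meeting an arch, since `a - 1` is paired neither with `a` nor with `m`.
-/

noncomputable section

variable (N : ℕ) [NeZero N]

/-- The adjacent transposition `f_i = (i, i+1)` of `{1,...,N}` (only used for
`i` with `i+1 < N`). -/
def adjT (i : Fin N) : Equiv.Perm (Fin N) := Equiv.swap i (i + 1)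

/-- The product `f_{i_k} ⋯ f_{i_1}` of the word `l = [i_k, …, i_1]`. -/
def wordProdFin (l : List (Fin N)) : Equiv.Perm (Fin N) := (l.map (adjT N)).prod

/-- The word `l = [i_k, …, i_1]` is tadpole-free for `π`: at no step `ℓ` does
`f_{i_{ℓ-1}} ⋯ f_{i_1}·π` (conjugation action) map `i_ℓ` to `i_ℓ + 1`. -/
def TadFreeFin (π : Equiv.Perm (Fin N)) : List (Fin N) → Prop
  | [] => True
  | i :: rest => TadFreeFin π rest ∧
      (wordProdFin N rest * π * (wordProdFin N rest)⁻¹) i ≠ i + 1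

open Equiv Relation

section

variable {N}

lemma adjT_inv (i : Fin N) : (adjT N i)⁻¹ = adjT N i := swap_inv _ _

lemma adjT_mul_self (i : Fin N) : adjT N i * adjT N i = 1 := swap_mul_self _ _

lemma adjT_conj_apply (σ : Perm (Fin N)) (i x : Fin N) :
    (adjT N i * σ * (adjT N i)⁻¹) x = adjT N i (σ (adjT N i x)) := by
  simp [adjT_inv]

lemma wordProdFin_cons (i : Fin N) (l : List (Fin N)) :
    wordProdFin N (i :: l) = adjT N i * wordProdFin N l := by
  simp [wordProdFin]

/-- Also forbidding `σ (i + 1) = i` makes the relation symmetric for arbitrary permutations. -/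
def IsTadpoleFreeStep (σ τ : Perm (Fin N)) : Prop :=
  ∃ i : Fin N, (i : ℕ) + 1 < N ∧ σ i ≠ i + 1 ∧ σ (i + 1) ≠ i ∧
    τ = adjT N i * σ * (adjT N i)⁻¹

instance : Std.Symm (IsTadpoleFreeStep (N := N)) where
  symm := by
    rintro σ τ ⟨i, hi, h₁, h₂, rfl⟩
    refine ⟨i, hi, ?_, ?_, ?_⟩
    · simpa [adjT_conj_apply, adjT, swap_apply_eq_iff] using h₂
    · simpa [adjT_conj_apply, adjT, swap_apply_eq_iff] using h₁
    · rw [adjT_inv, ← mul_assoc, ← mul_assoc, adjT_mul_self, one_mul, mul_assoc,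
        adjT_mul_self, mul_one]

lemma exists_word_of_reflTransGen {σ τ : Perm (Fin N)}
    (h : ReflTransGen IsTadpoleFreeStep σ τ) :
    ∃ l : List (Fin N), (∀ i ∈ l, (i : ℕ) + 1 < N) ∧
      wordProdFin N l * σ * (wordProdFin N l)⁻¹ = τ ∧ TadFreeFin N σ l := by
  induction h with
  | refl => exact ⟨[], by simp, by simp [wordProdFin], trivial⟩
  | tail _ hstep ih =>
    obtain ⟨l, hl, rfl, htf⟩ := ih
    obtain ⟨i, hi, hne, -, rfl⟩ := hstep
    refine ⟨i :: l, ?_, ?_, htf, hne⟩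
    · simpa [hi] using hl
    · rw [wordProdFin_cons, mul_inv_rev]
      group

end

def IsFixedPointFreeInvolution {α : Type*} (σ : Perm α) : Prop :=
  Function.Involutive σ ∧ ∀ x, σ x ≠ x

lemma IsFixedPointFreeInvolution.conj {α : Type*} {σ : Perm α}
    (hσ : IsFixedPointFreeInvolution σ) (g : Perm α) :
    IsFixedPointFreeInvolution (g * σ * g⁻¹) :=
  ⟨fun x => by simp [hσ.1 _], fun x hx => hσ.2 (g⁻¹ x) (Perm.eq_inv_iff_eq.mpr hx)⟩

/-- The partner of `j` in the standard involution `(0 1)(2 3)⋯`. -/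
def standardPartner (j : ℕ) : ℕ := if j % 2 = 0 then j + 1 else j - 1

def PairedBelow {n : ℕ} (σ : Perm (Fin n)) (m : ℕ) : Prop :=
  ∀ j : Fin n, (j : ℕ) < m → (σ j : ℕ) = standardPartner j

section

variable {n m : ℕ} {σ : Perm (Fin n)}

lemma eq_of_pairedBelow {τ : Perm (Fin n)} (hσ : PairedBelow σ n) (hτ : PairedBelow τ n) :
    σ = τ :=
  Equiv.ext fun j => Fin.ext ((hσ j j.isLt).trans (hτ j j.isLt).symm)

lemma PairedBelow.succ_le_partner (hσ : IsFixedPointFreeInvolution σ) (hpb : PairedBelow σ m)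
    (hm : m % 2 = 0) (hmn : m < n) : m + 1 ≤ (σ ⟨m, hmn⟩ : ℕ) := by
  by_contra! hlt
  have hne : (σ ⟨m, hmn⟩ : ℕ) ≠ m := fun h => hσ.2 _ (Fin.ext h)
  have hpartner := hpb (σ ⟨m, hmn⟩) (by omega)
  rw [hσ.1] at hpartner
  simp only [standardPartner] at hpartner
  split at hpartner <;> omega

lemma PairedBelow.add_two (hσ : Function.Involutive σ) (hpb : PairedBelow σ m)
    (hm : m % 2 = 0) (hmn : m < n) (hpair : (σ ⟨m, hmn⟩ : ℕ) = m + 1) :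
    PairedBelow σ (m + 2) := by
  intro j hj
  rcases Nat.lt_or_ge (j : ℕ) m with hjm | hjm
  · exact hpb j hjm
  by_cases hjm' : (j : ℕ) = m
  · obtain rfl : j = ⟨m, hmn⟩ := Fin.ext hjm'
    simp [standardPartner, hpair, hm]
  · obtain rfl : j = σ ⟨m, hmn⟩ := Fin.ext (by omega)
    rw [hσ, hpair]
    show m = standardPartner (m + 1)
    simp only [standardPartner]
    split <;> omega

end

section

variable {N} {σ : Perm (Fin N)} {m : ℕ}

lemma PairedBelow.exists_step_lower_partner (hσ : IsFixedPointFreeInvolution σ)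
    (hpb : PairedBelow σ m) (hm : m % 2 = 0) (hmN : m < N)
    (hfar : m + 2 ≤ (σ ⟨m, hmN⟩ : ℕ)) :
    ∃ τ, IsTadpoleFreeStep σ τ ∧ IsFixedPointFreeInvolution τ ∧ PairedBelow τ m ∧
      (τ ⟨m, hmN⟩ : ℕ) = σ ⟨m, hmN⟩ - 1 := by
  set a := σ ⟨m, hmN⟩ with ha
  have haN := a.isLt
  set i : Fin N := ⟨a - 1, by omega⟩
  have hi : (i : ℕ) + 1 < N := by simp only [i]; omega
  have hia : i + 1 = a := Fin.ext (by rw [Fin.val_add_one_of_lt' hi]; simp only [i]; omega)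
  have hfix : ∀ x : Fin N, (x : ℕ) ≤ m → adjT N i x = x := fun x hx =>
    swap_apply_of_ne_of_ne (fun h => by simp [h, i] at hx; omega)
      (fun h => by rw [hia] at h; subst h; omega)
  refine ⟨_, ⟨i, hi, ?_, ?_, rfl⟩, hσ.conj _, fun j hj => ?_, ?_⟩
  · rw [hia, ha, Ne, hσ.1.injective.eq_iff]
    exact fun h => by simp [i, Fin.ext_iff] at h; omega
  · rw [hia, ha, hσ.1]
    exact fun h => by simp [i, Fin.ext_iff] at h; omega
  · have hσj : (σ j : ℕ) < m := by
      rw [hpb j hj]; simp only [standardPartner]; split <;> omega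
    rw [adjT_conj_apply, hfix j hj.le, hfix _ hσj.le, hpb j hj]
  · rw [adjT_conj_apply, hfix ⟨m, hmN⟩ le_rfl, ← ha, ← hia, Fin.val_add_one_of_lt' hi]
    simp [adjT]

lemma exists_reflTransGen_pairedBelow_add_two (hm : m % 2 = 0) (hmN : m < N) (d : ℕ) :
    ∀ σ : Perm (Fin N), IsFixedPointFreeInvolution σ → PairedBelow σ m →
      (σ ⟨m, hmN⟩ : ℕ) = m + 1 + d →
      ∃ τ, ReflTransGen IsTadpoleFreeStep σ τ ∧ IsFixedPointFreeInvolution τ ∧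
        PairedBelow τ (m + 2) := by
  induction d with
  | zero => exact fun σ hσ hpb hpair => ⟨σ, .refl, hσ, hpb.add_two hσ.1 hm hmN hpair⟩
  | succ d ih =>
    intro σ hσ hpb hpair
    obtain ⟨τ, hstep, hτ, hτpb, hτm⟩ := hpb.exists_step_lower_partner hσ hm hmN (by omega)
    obtain ⟨ρ, hτρ, hρ, hρpb⟩ := ih τ hτ hτpb (by omega)
    exact ⟨ρ, .head hstep hτρ, hρ, hρpb⟩

lemma exists_reflTransGen_pairedBelow (hσ : IsFixedPointFreeInvolution σ) (n : ℕ)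
    (hn : 2 * n ≤ N) :
    ∃ τ, ReflTransGen IsTadpoleFreeStep σ τ ∧ IsFixedPointFreeInvolution τ ∧
      PairedBelow τ (2 * n) := by
  induction n with
  | zero => exact ⟨σ, .refl, hσ, fun j hj => absurd hj (by omega)⟩
  | succ n ih =>
    obtain ⟨τ, hστ, hτ, hτpb⟩ := ih (by omega)
    have hmN : 2 * n < N := by omega
    obtain ⟨ρ, hτρ, hρ, hρpb⟩ := exists_reflTransGen_pairedBelow_add_two (by omega) hmN
      (τ ⟨2 * n, hmN⟩ - (2 * n + 1)) τ hτ hτpb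
      (by have := hτpb.succ_le_partner hτ (by omega) hmN; omega)
    exact ⟨ρ, hστ.trans hτρ, hρ, hρpb⟩

lemma reflTransGen_of_isFixedPointFreeInvolution (hN : Even N) {σ τ : Perm (Fin N)}
    (hσ : IsFixedPointFreeInvolution σ) (hτ : IsFixedPointFreeInvolution τ) :
    ReflTransGen IsTadpoleFreeStep σ τ := by
  obtain ⟨n, hn⟩ := even_iff_exists_two_mul.mp hN
  obtain ⟨σ₀, hσσ₀, -, hσ₀⟩ := exists_reflTransGen_pairedBelow hσ n hn.ge
  obtain ⟨τ₀, hττ₀, -, hτ₀⟩ := exists_reflTransGen_pairedBelow hτ n hn.ge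
  rw [← hn] at hσ₀ hτ₀
  rw [eq_of_pairedBelow hσ₀ hτ₀] at hσσ₀
  exact hσσ₀.trans (Std.Symm.symm _ _ hττ₀)

end

/-- Nonemptiness of `Ŝ_{π,π'}`: a finite tadpole-free word conjugating π to π'
always exists. -/
theorem exists_tadpole_free_word (hN : ∃ n, N = 2 * n)
    (π π' : Equiv.Perm (Fin N))
    (hπ : ∀ x, π (π x) = x) (hπf : ∀ x, π x ≠ x)
    (hπ' : ∀ x, π' (π' x) = x) (hπ'f : ∀ x, π' x ≠ x) :
    ∃ (s : Equiv.Perm (Fin N)) (l : List (Fin N)),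
      (∀ i ∈ l, (i : ℕ) + 1 < N) ∧
      s = wordProdFin N l ∧
      s * π * s⁻¹ = π' ∧
      TadFreeFin N π l := by
  obtain ⟨l, hl, hconj, htf⟩ := exists_word_of_reflTransGen <|
    reflTransGen_of_isFixedPointFreeInvolution (even_iff_exists_two_mul.mpr hN)
      ⟨hπ, hπf⟩ ⟨hπ', hπ'f⟩
  exact ⟨_, l, hl, rfl, hconj, htf⟩

end
end

section
/- The maximal dimension of a B-orbit B·π_< in {M² = 0} ∩ (strictly upper triangular N×N matrices) is ⌊N²/4⌋, and it is achieved exactly when the involution π has no crossings and at most one fixed point. -/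
/-!
Writing `N = 2a + k` (a matching has at most `N / 2` arches), `a (N - a) = ⌊N²/4⌋ - ⌊k²/4⌋`,
which equals `⌊N²/4⌋` exactly when `k ≤ 1`; subtracting the crossing number only lowers it.
For an involution `k` is the number of fixed points, and the adjacent pairing `(0 1)(2 3)⋯`
has no crossings and at most one fixed point.
-/

noncomputable section

def numArches {N : ℕ} (π : Equiv.Perm (Fin N)) : ℕ :=
  (Finset.univ.filter fun i : Fin N => π i ≠ i).card / 2

def numCrossings {N : ℕ} (π : Equiv.Perm (Fin N)) : ℕ :=
  (Finset.univ.filter fun p : Fin N × Fin N =>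
      p.1 < π p.1 ∧ p.2 < π p.2 ∧ p.1 < p.2 ∧ p.2 < π p.1 ∧ π p.1 < π p.2).card
  + (Finset.univ.filter fun p : Fin N × Fin N =>
      p.1 < π p.1 ∧ π p.2 = p.2 ∧ p.1 < p.2 ∧ p.2 < π p.1).card

/-- The orbit dimension `a(N-a) - c` of an involution. -/
def orbDim {N : ℕ} (π : Equiv.Perm (Fin N)) : ℕ :=
  numArches π * (N - numArches π) - numCrossings π

open Finset

lemma sq_add_div_four (a k : ℕ) : (2 * a + k) ^ 2 / 4 = a * (a + k) + k ^ 2 / 4 := by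
  rw [show (2 * a + k) ^ 2 = 4 * (a * (a + k)) + k ^ 2 by ring, Nat.mul_add_div (by norm_num)]

lemma mul_sub_le_sq_div_four {N a : ℕ} (h : 2 * a ≤ N) : a * (N - a) ≤ N ^ 2 / 4 := by
  obtain ⟨k, rfl⟩ := Nat.exists_eq_add_of_le h
  rw [sq_add_div_four, show 2 * a + k - a = a + k by omega]
  exact Nat.le_add_right _ _

lemma mul_sub_eq_sq_div_four_iff {N a : ℕ} (h : 2 * a ≤ N) :
    a * (N - a) = N ^ 2 / 4 ↔ N - 2 * a ≤ 1 := by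
  obtain ⟨k, rfl⟩ := Nat.exists_eq_add_of_le h
  rw [sq_add_div_four, show 2 * a + k - a = a + k by omega, left_eq_add,
    Nat.div_eq_zero_iff, Nat.add_sub_cancel_left]
  constructor
  · rintro (h | h) <;> nlinarith
  · intro h; right; nlinarith

variable {N : ℕ}

lemma two_mul_numArches_le (π : Equiv.Perm (Fin N)) : 2 * numArches π ≤ N := by
  have h := (card_filter_le univ fun i : Fin N => π i ≠ i).trans_eq (card_fin N)
  unfold numArches
  omega

lemma two_mul_numArches_of_involutive {π : Equiv.Perm (Fin N)} (hπ : ∀ x, π (π x) = x) :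
    2 * numArches π = #π.support := by
  have h : π ^ 2 = 1 := Equiv.ext fun x => by simp [sq, hπ]
  exact Nat.mul_div_cancel' (Equiv.Perm.two_dvd_card_support h)

lemma sub_two_mul_numArches_of_involutive {π : Equiv.Perm (Fin N)} (hπ : ∀ x, π (π x) = x) :
    N - 2 * numArches π = #π.supportᶜ := by
  rw [two_mul_numArches_of_involutive hπ, card_compl, Fintype.card_fin]

lemma numCrossings_eq_zero_of_forall_le {π : Equiv.Perm (Fin N)}
    (h : ∀ i j, i < j → π i ≤ j) : numCrossings π = 0 := by
  unfold numCrossings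
  rw [Nat.add_eq_zero_iff, card_eq_zero, card_eq_zero, filter_eq_empty_iff, filter_eq_empty_iff]
  exact ⟨fun p _ hp => (h _ _ hp.2.2.1).not_gt hp.2.2.2.1,
    fun p _ hp => (h _ _ hp.2.2.1).not_gt hp.2.2.2⟩

lemma numCrossings_eq_zero_of_le_one (hN : N ≤ 1) (π : Equiv.Perm (Fin N)) :
    numCrossings π = 0 :=
  numCrossings_eq_zero_of_forall_le fun i j hij => by
    have := j.isLt; rw [Fin.lt_def] at hij; omega

lemma orbDim_le (π : Equiv.Perm (Fin N)) : orbDim π ≤ N ^ 2 / 4 :=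
  (Nat.sub_le _ _).trans (mul_sub_le_sq_div_four (two_mul_numArches_le π))

lemma orbDim_eq_sq_div_four_iff (π : Equiv.Perm (Fin N)) :
    orbDim π = N ^ 2 / 4 ↔ numCrossings π = 0 ∧ N - 2 * numArches π ≤ 1 := by
  have hle := mul_sub_le_sq_div_four (two_mul_numArches_le π)
  rw [← mul_sub_eq_sq_div_four_iff (two_mul_numArches_le π), orbDim]
  constructor
  · intro h
    by_cases hc : numCrossings π ≤ numArches π * (N - numArches π)
    · omega
    · -- truncated subtraction: here `orbDim π = 0`, so `N ≤ 1` and there are no crossings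
      have hN : N ≤ 1 := by
        by_contra! hN
        have : 4 ≤ N ^ 2 := by nlinarith
        omega
      have := numCrossings_eq_zero_of_le_one hN π
      omega
  · rintro ⟨hc, h⟩
    rw [hc, Nat.sub_zero, h]

def adjacentPartner (N v : ℕ) : ℕ :=
  if v % 2 = 0 ∧ v + 1 < N then v + 1 else if v % 2 = 1 then v - 1 else v

lemma adjacentPartner_lt {v : ℕ} (h : v < N) : adjacentPartner N v < N := by
  unfold adjacentPartner; split_ifs <;> omega

lemma adjacentPartner_adjacentPartner {v : ℕ} (h : v < N) :
    adjacentPartner N (adjacentPartner N v) = v := by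
  unfold adjacentPartner; split_ifs <;> omega

lemma adjacentPartner_le_succ (v : ℕ) : adjacentPartner N v ≤ v + 1 := by
  unfold adjacentPartner; split_ifs <;> omega

lemma succ_eq_of_adjacentPartner_eq {v : ℕ} (h : v < N) (hv : adjacentPartner N v = v) :
    v + 1 = N := by
  unfold adjacentPartner at hv; split_ifs at hv <;> omega

def adjacentPairing (N : ℕ) : Equiv.Perm (Fin N) :=
  Function.Involutive.toPerm (fun x => ⟨adjacentPartner N x, adjacentPartner_lt x.isLt⟩)
    fun x => Fin.ext (adjacentPartner_adjacentPartner x.isLt)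

lemma adjacentPairing_val (x : Fin N) : (adjacentPairing N x).val = adjacentPartner N x := rfl

lemma adjacentPairing_involutive (x : Fin N) : adjacentPairing N (adjacentPairing N x) = x :=
  Fin.ext (adjacentPartner_adjacentPartner x.isLt)

lemma numCrossings_adjacentPairing : numCrossings (adjacentPairing N) = 0 :=
  numCrossings_eq_zero_of_forall_le fun i j hij => by
    have := adjacentPartner_le_succ (N := N) i
    rw [Fin.lt_def] at hij
    rw [Fin.le_def, adjacentPairing_val]
    omega

lemma card_compl_support_adjacentPairing_le_one : #(adjacentPairing N).supportᶜ ≤ 1 := by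
  have hlast : ∀ x ∈ (adjacentPairing N).supportᶜ, x.val + 1 = N := fun x hx => by
    rw [mem_compl, Equiv.Perm.mem_support, not_not, Fin.ext_iff, adjacentPairing_val] at hx
    exact succ_eq_of_adjacentPartner_eq x.isLt hx
  exact card_le_one.mpr fun x hx y hy => Fin.ext (by have := hlast x hx; have := hlast y hy; omega)

/-- Over all involutions of `{1,...,N}`, the maximum of `a(N-a) - c` is
`⌊N²/4⌋`, attained exactly when there are no crossings and at most one fixed
point. -/
theorem max_orbit_dimension (N : ℕ) :
    (∀ π : Equiv.Perm (Fin N), (∀ x, π (π x) = x) → orbDim π ≤ N^2 / 4) ∧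
    (∀ π : Equiv.Perm (Fin N), (∀ x, π (π x) = x) →
      (orbDim π = N^2 / 4 ↔ (numCrossings π = 0 ∧ N - 2 * numArches π ≤ 1))) ∧
    (∃ π : Equiv.Perm (Fin N), (∀ x, π (π x) = x) ∧ orbDim π = N^2 / 4) := by
  refine ⟨fun π _ => orbDim_le π, fun π _ => orbDim_eq_sq_div_four_iff π,
    adjacentPairing N, adjacentPairing_involutive, ?_⟩
  rw [orbDim_eq_sq_div_four_iff, sub_two_mul_numArches_of_involutive adjacentPairing_involutive]
  exact ⟨numCrossings_adjacentPairing, card_compl_support_adjacentPairing_le_one⟩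

end
end

section
/- For involutions π, ρ ∈ S_N, if the B-orbit closure of π_< contains the B-orbit of ρ_<, then for all 1 ≤ i < j ≤ N the interval rank rank π_{[i,j]} := #{i ≤ a < b ≤ j : π(a) = b} satisfies rank π_{[i,j]} ≥ rank ρ_{[i,j]}. -/
open Matrix

noncomputable section

def strictUpper {N : ℕ} (π : Equiv.Perm (Fin N)) : Matrix (Fin N) (Fin N) ℂ :=
  Matrix.of fun i j => if π i = j ∧ i < j then 1 else 0

/-- The orbit `B·π_<` under conjugation by invertible upper triangular
matrices, inside the space of `N × N` complex matrices. -/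
def Borbit {N : ℕ} (π : Equiv.Perm (Fin N)) : Set (Fin N → Fin N → ℂ) :=
  {X | ∃ b : (Matrix (Fin N) (Fin N) ℂ)ˣ,
    (∀ i j : Fin N, j < i → (b : Matrix (Fin N) (Fin N) ℂ) i j = 0) ∧
    Matrix.of X = (b : Matrix (Fin N) (Fin N) ℂ) * strictUpper π *
      ((↑b⁻¹ : Matrix (Fin N) (Fin N) ℂ)) }

/-- `rank π_{[i,j]} = #{i ≤ a < b ≤ j : π a = b}`: the number of complete
arches of `π` between positions `i` and `j`. -/
def intervalRank {N : ℕ} (π : Equiv.Perm (Fin N)) (i j : Fin N) : ℕ :=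
  (Finset.univ.filter fun p : Fin N × Fin N =>
    i ≤ p.1 ∧ p.1 < p.2 ∧ p.2 ≤ j ∧ π p.1 = p.2).card

/-!
Conjugating by an invertible upper triangular `b` multiplies the southwest block
`M_{≥i,≤j}` on both sides by the diagonal blocks `b_{≥i,≥i}` and `(b⁻¹)_{≤j,≤j}`, which are
invertible, so the rank of that block is constant on `B·π_<`. For `π_<` the block is a partial
permutation matrix with one nonzero entry per arch of `π` inside `[i, j]`, so the constant is
`rank π_{[i,j]}`. Rank is lower semicontinuous, i.e. `{M | rank M ≤ r}` is closed, so the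
block rank can only drop on the closure of the orbit.
-/

namespace Matrix

section Topology

variable {𝕜 m n : Type*} [NontriviallyNormedField 𝕜] [CompleteSpace 𝕜] [Fintype m] [Fintype n]

theorem isClosed_setOf_rank_le (r : ℕ) : IsClosed {M : Matrix m n 𝕜 | M.rank ≤ r} := by
  classical
  let φ : Matrix m n 𝕜 →ₗ[𝕜] (n → 𝕜) →L[𝕜] (m → 𝕜) :=
    LinearMap.toContinuousLinearMap.toLinearMap ∘ₗ Matrix.toLin'.toLinearMap
  have hrank (M : Matrix m n 𝕜) : (φ M : (n → 𝕜) →ₗ[𝕜] (m → 𝕜)).rank = M.rank :=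
    (Module.finrank_eq_rank 𝕜 (LinearMap.range M.mulVecLin)).symm
  have hcompl : {M : Matrix m n 𝕜 | M.rank ≤ r}ᶜ =
      φ ⁻¹' {f | ↑(r + 1) ≤ (f : (n → 𝕜) →ₗ[𝕜] (m → 𝕜)).rank} := by
    ext M
    simp only [Set.mem_compl_iff, Set.mem_preimage, Set.mem_ofPred_eq, hrank, Nat.cast_le, not_le,
      Nat.lt_iff_add_one_le]
  rw [← isOpen_compl_iff, hcompl]
  exact (isOpen_setOfPred_nat_le_rank (r + 1)).preimage φ.continuous_of_finiteDimensional

theorem isClosed_setOf_rank_toBlock_le (p : m → Prop) (q : n → Prop) [DecidablePred p]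
    [DecidablePred q] (r : ℕ) :
    IsClosed {M : Matrix m n 𝕜 | (M.toBlock p q).rank ≤ r} :=
  (isClosed_setOf_rank_le r).preimage <|
    continuous_pi fun a => continuous_pi fun b => continuous_apply_apply a.1 b.1

end Topology

section Triangular

variable {α n R : Type*} [LinearOrder α] [Fintype α] [Field R]
  {p q : α → Prop} [DecidablePred p] [DecidablePred q]

theorem IsUpperTriangular.toBlock_mul {u : Matrix α α R} (hu : u.IsUpperTriangular)
    (hp : IsUpperSet {a | p a}) (M : Matrix α n R) (r : n → Prop) :
    (u * M).toBlock p r = u.toBlock p p * M.toBlock p r := by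
  have hzero : (u.toBlock p fun c => ¬p c) = 0 := by
    ext a c
    exact hu (lt_of_not_ge fun hac => c.2 (hp hac a.2))
  rw [toBlock_mul_eq_add p p r, hzero, Matrix.zero_mul, add_zero]

theorem IsUpperTriangular.mul_toBlock {v : Matrix α α R} (hv : v.IsUpperTriangular)
    (hq : IsLowerSet {a | q a}) (M : Matrix n α R) (r : n → Prop) :
    (M * v).toBlock r q = M.toBlock r q * v.toBlock q q := by
  have hzero : (v.toBlock (fun c => ¬q c) q) = 0 := by
    ext c a
    exact hv (lt_of_not_ge fun hca => c.2 (hq hca a.2))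
  rw [toBlock_mul_eq_add r q q, hzero, Matrix.mul_zero, add_zero]

theorem IsUpperTriangular.det_toBlock_ne_zero {u : Matrix α α R} (hu : u.IsUpperTriangular)
    (hdet : u.det ≠ 0) (p : α → Prop) [DecidablePred p] : (u.toBlock p p).det ≠ 0 := by
  have hblock : (u.toBlock p p).IsUpperTriangular := fun _ _ h => hu h
  rw [det_of_isUpperTriangular hu, Finset.prod_ne_zero_iff] at hdet
  rw [det_of_isUpperTriangular hblock, Finset.prod_ne_zero_iff]
  exact fun a _ => hdet a (Finset.mem_univ _)

theorem rank_toBlock_units_conj {b : (Matrix α α R)ˣ}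
    (hb : (b : Matrix α α R).IsUpperTriangular) (hp : IsUpperSet {a | p a})
    (hq : IsLowerSet {a | q a}) (M : Matrix α α R) :
    ((b * M * b⁻¹ : Matrix α α R).toBlock p q).rank = (M.toBlock p q).rank := by
  have : Invertible (b : Matrix α α R) := b.invertible
  have hb' : (↑b⁻¹ : Matrix α α R).IsUpperTriangular := by
    rw [coe_units_inv]; exact blockTriangular_inv_of_blockTriangular hb
  rw [hb'.mul_toBlock hq, hb.toBlock_mul hp,
    rank_mul_eq_left_of_isUnit_det _ _
      (hb'.det_toBlock_ne_zero (isUnits_det_units b⁻¹).ne_zero q).isUnit,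
    rank_mul_eq_right_of_isUnit_det _ _
      (hb.det_toBlock_ne_zero (isUnits_det_units b).ne_zero p).isUnit]

end Triangular

theorem rank_eq_card_row_ne_zero_of_disjoint_supports {m n R : Type*} [Fintype m] [Fintype n]
    [Field R] [PartialOrder R] [StarRing R] [StarOrderedRing R] (A : Matrix m n R)
    (hA : Pairwise fun a a' => ∀ b, A a b = 0 ∨ A a' b = 0) :
    A.rank = Nat.card {a // A a ≠ 0} := by
  classical
  have hdiag : A * Aᴴ = diagonal fun a => A a ⬝ᵥ star (A a) := by
    ext a a'
    rcases eq_or_ne a a' with rfl | hne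
    · simp [mul_apply, dotProduct]
    · rw [diagonal_apply_ne _ hne, mul_apply]
      refine Finset.sum_eq_zero fun b _ => ?_
      rcases hA hne b with h | h <;> simp [h]
  rw [← rank_self_mul_conjTranspose, hdiag, rank_diagonal, Nat.card_eq_fintype_card]
  simp only [ne_eq, dotProduct_self_star_eq_zero]

end Matrix

section StrictUpper

open ComplexOrder

variable {N : ℕ}

theorem intervalRank_eq_card (π : Equiv.Perm (Fin N)) (i j : Fin N) :
    intervalRank π i j = Nat.card {a : Fin N // i ≤ a ∧ a < π a ∧ π a ≤ j} := by
  rw [intervalRank, Nat.card_eq_fintype_card, Fintype.card_subtype]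
  refine Finset.card_nbij' Prod.fst (fun a => (a, π a)) ?_ ?_ ?_ ?_ <;>
    simp +contextual [Set.MapsTo, Set.LeftInvOn, Set.RightInvOn]

theorem strictUpper_toBlock_row_ne_zero_iff (π : Equiv.Perm (Fin N)) (i j : Fin N)
    (a : {a : Fin N // i ≤ a}) :
    (strictUpper π).toBlock (i ≤ ·) (· ≤ j) a ≠ 0 ↔ a.1 < π a ∧ π a ≤ j := by
  simp [funext_iff, strictUpper, and_comm]

theorem rank_toBlock_strictUpper (π : Equiv.Perm (Fin N)) (i j : Fin N) :
    ((strictUpper π).toBlock (i ≤ ·) (· ≤ j)).rank = intervalRank π i j := by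
  rw [rank_eq_card_row_ne_zero_of_disjoint_supports, intervalRank_eq_card]
  · exact Nat.card_congr
      ((Equiv.subtypeEquivRight (strictUpper_toBlock_row_ne_zero_iff π i j)).trans
        (Equiv.subtypeSubtypeEquivSubtypeInter (i ≤ ·) fun a => a < π a ∧ π a ≤ j))
  · intro a a' hne b
    by_cases hab : π a = b
    · have ha'b : π a' ≠ b := fun h => hne (Subtype.ext (π.injective (hab.trans h.symm)))
      simp [strictUpper, ha'b]
    · simp [strictUpper, hab]

theorem strictUpper_mem_Borbit (π : Equiv.Perm (Fin N)) :
    (strictUpper π : Fin N → Fin N → ℂ) ∈ Borbit π :=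
  ⟨1, fun _ _ h => one_apply_ne h.ne', by
    rw [inv_one, Units.val_one, Matrix.one_mul, Matrix.mul_one]; rfl⟩

theorem rank_toBlock_of_mem_Borbit {π : Equiv.Perm (Fin N)} {X : Fin N → Fin N → ℂ}
    (hX : X ∈ Borbit π) (i j : Fin N) :
    ((of X).toBlock (i ≤ ·) (· ≤ j)).rank = intervalRank π i j := by
  obtain ⟨b, hb, hX⟩ := hX
  rw [hX, rank_toBlock_units_conj (fun _ _ h => hb _ _ h) (isUpperSet_Ici i) (isLowerSet_Iic j),
    rank_toBlock_strictUpper]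

end StrictUpper

theorem closure_implies_rank_ineq_general {N : ℕ} (π ρ : Equiv.Perm (Fin N))
    (h : Borbit ρ ⊆ closure (Borbit π)) :
    ∀ i j : Fin N, i < j → intervalRank ρ i j ≤ intervalRank π i j := by
  intro i j _
  have hclosed := isClosed_setOf_rank_toBlock_le (𝕜 := ℂ) (i ≤ ·) (· ≤ j) (intervalRank π i j)
  have hρ := strictUpper_mem_Borbit ρ
  have hle := closure_minimal (fun X hX => (rank_toBlock_of_mem_Borbit hX i j).le) hclosed (h hρ)
  exact (rank_toBlock_of_mem_Borbit hρ i j).symm.trans_le hle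

/-- If `closure (B·π_<) ⊇ B·ρ_<`, then `rank π_{[i,j]} ≥ rank ρ_{[i,j]}` for
all `i < j`. -/
theorem closure_implies_rank_ineq {N : ℕ} (π ρ : Equiv.Perm (Fin N))
    (hπ : ∀ x, π (π x) = x) (hρ : ∀ x, ρ (ρ x) = x)
    (h : Borbit ρ ⊆ closure (Borbit π)) :
    ∀ i j : Fin N, i < j → intervalRank ρ i j ≤ intervalRank π i j :=
  closure_implies_rank_ineq_general π ρ h

end
end
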